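/- (Countable change of variable.) With T compact metric, X Hilbert, (ω_i) Lipschitz self-maps with bounded Lipschitz constants and (R_i) ⊂ L(X) with ∑ ‖R_i‖ < ∞, for every continuous f : T → X and μ ∈ cabv(X): ∫ f d(H(μ)) = ∫ g dμ, where H(μ) = ∑_{i=1}^∞ R_i ∘ ω_i(μ) (convergent in variational norm) and g = ∑_{i=1}^∞ R_i* ∘ f ∘ ω_i (convergent uniformly on T). -/

import Mathlib

open MeasureTheory Filter Topology Set

noncomputable section

/-- A finite Borel partition of the whole space. -/
def IsBorelPartition {T : Type*} [MeasurableSpace T] (P : Finset (Set T)) : Prop :=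
  (∀ A ∈ P, MeasurableSet A) ∧ ((P : Set (Set T)).PairwiseDisjoint id) ∧
    ⋃₀ (P : Set (Set T)) = Set.univ

/-- Total variation of a vector measure, as an extended real. -/
def evar {T X : Type*} [MeasurableSpace T] [NormedAddCommGroup X]
    (μ : VectorMeasure T X) : ENNReal :=
  ⨆ (P : Finset (Set T)) (_ : IsBorelPartition P), ∑ A ∈ P, (‖μ A‖₊ : ENNReal)

/-- Bounded variation. -/
def BddVar {T X : Type*} [MeasurableSpace T] [NormedAddCommGroup X]
    (μ : VectorMeasure T X) : Prop := evar μ ≠ ⊤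

/-- The variational norm. -/
def varNorm {T X : Type*} [MeasurableSpace T] [NormedAddCommGroup X]
    (μ : VectorMeasure T X) : ℝ := (evar μ).toReal

/-- Composition of a bounded operator with a vector measure. -/
def opComp {T X Y 𝕜 : Type*} [MeasurableSpace T] [NontriviallyNormedField 𝕜]
    [NormedAddCommGroup X] [NormedSpace 𝕜 X] [NormedAddCommGroup Y] [NormedSpace 𝕜 Y]
    (R : X →L[𝕜] Y) (μ : VectorMeasure T X) : VectorMeasure T Y :=
  μ.mapRange R.toLinearMap.toAddMonoidHom R.continuous

/-- The Markov-type operator generated by operators `R i` and maps `ω i`. -/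
def markovH {T X 𝕜 : Type*} [MeasurableSpace T] [NontriviallyNormedField 𝕜]
    [NormedAddCommGroup X] [NormedSpace 𝕜 X] {M : ℕ}
    (R : Fin M → X →L[𝕜] X) (ω : Fin M → T → T) (μ : VectorMeasure T X) :
    VectorMeasure T X :=
  ∑ i, opComp (R i) (μ.map (ω i))

/-- Simple (finitely-valued, measurable) function. -/
def IsSimpleFn {T X : Type*} [MeasurableSpace T] (g : T → X) : Prop :=
  (Set.range g).Finite ∧ ∀ x : X, MeasurableSet (g ⁻¹' {x})

/-- Integral of a simple function against a vector measure. -/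
def simpleIntegral (𝕜 : Type*) {T X : Type*} [RCLike 𝕜] [MeasurableSpace T]
    [NormedAddCommGroup X] [InnerProductSpace 𝕜 X] (μ : VectorMeasure T X) (g : T → X) : 𝕜 :=
  ∑ᶠ x : X, (inner 𝕜 x (μ (g ⁻¹' {x})) : 𝕜)

/-- `I` is the (uniform, sesquilinear) integral of `f` with respect to `μ`. -/
def HasUIntegral (𝕜 : Type*) {T X : Type*} [RCLike 𝕜] [MeasurableSpace T]
    [NormedAddCommGroup X] [InnerProductSpace 𝕜 X] (μ : VectorMeasure T X)
    (f : T → X) (I : 𝕜) : Prop :=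
  ∀ g : ℕ → T → X, (∀ n, IsSimpleFn (g n)) → TendstoUniformly g f atTop →
    Tendsto (fun n => simpleIntegral 𝕜 μ (g n)) atTop (nhds I)

/-- The uniform integral (defaulting to `0` when it does not exist). -/
def uIntegral (𝕜 : Type*) {T X : Type*} [RCLike 𝕜] [MeasurableSpace T]
    [NormedAddCommGroup X] [InnerProductSpace 𝕜 X] (μ : VectorMeasure T X) (f : T → X) : 𝕜 :=
  letI := Classical.propDecidable
  if h : ∃ I, HasUIntegral 𝕜 μ f I then h.choose else 0

/-- The Monge–Kantorovich norm. -/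
def mkNorm (𝕜 : Type*) {T X : Type*} [RCLike 𝕜] [PseudoMetricSpace T] [MeasurableSpace T]
    [NormedAddCommGroup X] [InnerProductSpace 𝕜 X] (μ : VectorMeasure T X) : ℝ :=
  sSup {s | ∃ (f : T → X) (L : NNReal), LipschitzWith L f ∧ (∀ t, ‖f t‖ + (L : ℝ) ≤ 1) ∧
    s = ‖uIntegral 𝕜 μ f‖}

/-- The modified Monge–Kantorovich norm. -/
def mkNormStar (𝕜 : Type*) {T X : Type*} [RCLike 𝕜] [PseudoMetricSpace T] [MeasurableSpace T]
    [NormedAddCommGroup X] [InnerProductSpace 𝕜 X] (μ : VectorMeasure T X) : ℝ :=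
  sSup {s | ∃ f : T → X, LipschitzWith 1 f ∧ s = ‖uIntegral 𝕜 μ f‖}

/-- The `X`-valued Dirac measure `B ↦ δ_t(B) • x`. -/
def diracVM {T : Type*} [MeasurableSpace T] {𝕜 X : Type*} [RCLike 𝕜]
    [NormedAddCommGroup X] [NormedSpace 𝕜 X] (t : T) (x : X) : VectorMeasure T X :=
  ((Measure.dirac t).toSignedMeasure).mapRange
    { toFun := fun c : ℝ => (c : 𝕜) • x
      map_zero' := by simp
      map_add' := fun a b => by push_cast; rw [add_smul] }
    (RCLike.continuous_ofReal.smul continuous_const)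

end

/-!
For a simple function `φ` the formula is a finite computation,
`∫ φ dν = ∑ₓ ⟪x, ν (φ⁻¹ {x})⟫ = ∑ₓ ∑ᵢ ⟪R i* x, μ (ω i⁻¹ (φ⁻¹ {x}))⟫ = ∑ᵢ ∫ R i* ∘ φ ∘ ω i dμ`.
Integration of simple functions against a measure `m` of bounded variation is Lipschitz for the
sup norm with constant `‖m‖`, and `‖ν‖ ≤ (∑ ‖R i‖) ‖μ‖`. So for simple `φ n → f` uniformly,
`∫ φ n dν` converges to `∫ f dν`. The truncations `∑_{i < n} R i* ∘ φ n ∘ ω i` are simple,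
converge uniformly to `g`, and their `μ`-integrals differ from `∫ φ n dν` by at most
`(∑_{i ≥ n} ‖R i‖) ‖φ n‖_∞ ‖μ‖ → 0`.
-/

open scoped InnerProductSpace

theorem MeasureTheory.SimpleFunc.coe_finsetSum {α β ι : Type*} [MeasurableSpace α]
    [AddCommMonoid β] (s : Finset ι) (φ : ι → SimpleFunc α β) :
    ⇑(∑ i ∈ s, φ i) = ∑ i ∈ s, ⇑(φ i) :=
  map_sum (⟨⟨(⇑), coe_zero⟩, coe_add⟩ : SimpleFunc α β →+ α → β) φ s

def IsSimpleFn.toSimpleFunc {T X : Type*} [MeasurableSpace T] {g : T → X} (hg : IsSimpleFn g) :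
    SimpleFunc T X :=
  ⟨g, hg.2, hg.1⟩

@[simp]
theorem IsSimpleFn.coe_toSimpleFunc {T X : Type*} [MeasurableSpace T] {g : T → X}
    (hg : IsSimpleFn g) : ⇑hg.toSimpleFunc = g := rfl

section Variation

variable {T X : Type*} [MeasurableSpace T] [NormedAddCommGroup X] {m : VectorMeasure T X}

theorem IsBorelPartition.insert_compl_sUnion {P : Finset (Set T)}
    (hP : ∀ A ∈ P, MeasurableSet A) (hd : (P : Set (Set T)).PairwiseDisjoint id) :
    IsBorelPartition (insert (⋃₀ (P : Set (Set T)))ᶜ P) := by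
  refine ⟨Finset.forall_mem_insert _ _ _ |>.2 ⟨?_, hP⟩, ?_, ?_⟩
  · exact (MeasurableSet.sUnion P.countable_toSet fun A hA => hP A hA).compl
  · rw [Finset.coe_insert]
    exact hd.insert fun A hA _ => disjoint_compl_left.mono_right (subset_sUnion_of_mem hA)
  · rw [Finset.coe_insert, sUnion_insert, compl_union_self]

theorem sum_norm_le_varNorm_of_isBorelPartition (hm : BddVar m) {P : Finset (Set T)}
    (hP : IsBorelPartition P) : ∑ A ∈ P, ‖m A‖ ≤ varNorm m := by
  have := ENNReal.toReal_mono hm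
    (le_iSup₂ (f := fun P (_ : IsBorelPartition P) => ∑ A ∈ P, (‖m A‖₊ : ENNReal)) P hP)
  simpa [varNorm, ENNReal.toReal_sum] using this

theorem sum_norm_le_varNorm (hm : BddVar m) {ι : Type*} {s : Finset ι} {B : ι → Set T}
    (hB : ∀ i ∈ s, MeasurableSet (B i)) (hd : (s : Set ι).PairwiseDisjoint B) :
    ∑ i ∈ s, ‖m (B i)‖ ≤ varNorm m := by
  classical
  have himage : ((s.image B : Finset (Set T)) : Set (Set T)).PairwiseDisjoint id := by
    rw [Finset.coe_image]
    rintro _ ⟨i, hi, rfl⟩ _ ⟨j, hj, rfl⟩ hij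
    exact hd hi hj fun h => hij (congrArg B h)
  calc ∑ i ∈ s, ‖m (B i)‖ = ∑ A ∈ s.image B, ‖m A‖ :=
        (Finset.sum_image_of_disjoint (g := fun A => ‖m A‖) (by simp) hd).symm
    _ ≤ ∑ A ∈ insert (⋃₀ ((s.image B : Finset (Set T)) : Set (Set T)))ᶜ (s.image B), ‖m A‖ :=
        Finset.sum_le_sum_of_subset_of_nonneg (Finset.subset_insert _ _)
          fun _ _ _ => norm_nonneg _
    _ ≤ varNorm m := sum_norm_le_varNorm_of_isBorelPartition hm <|
        IsBorelPartition.insert_compl_sUnion (by simpa using hB) himage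

theorem bddVar_of_sum_norm_le {C : ℝ}
    (h : ∀ P : Finset (Set T), IsBorelPartition P → ∑ A ∈ P, ‖m A‖ ≤ C) : BddVar m := by
  refine ne_top_of_le_ne_top (ENNReal.ofReal_ne_top (r := C)) (iSup₂_le fun P hP => ?_)
  calc ∑ A ∈ P, (‖m A‖₊ : ENNReal) = ENNReal.ofReal (∑ A ∈ P, ‖m A‖) := by
        rw [ENNReal.ofReal_sum_of_nonneg fun _ _ => norm_nonneg _]
        simp only [ofReal_norm, enorm_eq_nnnorm]
    _ ≤ ENNReal.ofReal C := ENNReal.ofReal_le_ofReal (h P hP)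

end Variation

section SimpleIntegral

variable {T : Type*} [MeasurableSpace T] {𝕜 X : Type*} [RCLike 𝕜] [NormedAddCommGroup X]
  [InnerProductSpace 𝕜 X] (m : VectorMeasure T X)

theorem simpleIntegral_eq_sum (φ : SimpleFunc T X) :
    simpleIntegral 𝕜 m φ = ∑ x ∈ φ.range, ⟪x, m (φ ⁻¹' {x})⟫_𝕜 := by
  refine finsum_eq_sum_of_support_subset _ fun x hx => ?_
  rw [Finset.mem_coe, SimpleFunc.mem_range]
  by_contra h
  exact hx (by simp only [preimage_singleton_eq_empty.2 h, VectorMeasure.empty, inner_zero_right])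

theorem simpleIntegral_map {α : Type*} (p : SimpleFunc T α) (g : α → X) {s : Finset α}
    (hs : p.range ⊆ s) :
    simpleIntegral 𝕜 m (p.map g) = ∑ a ∈ s, ⟪g a, m (p ⁻¹' {a})⟫_𝕜 := by
  classical
  rw [← Finset.sum_subset hs fun a _ ha => by
    rw [preimage_singleton_eq_empty.2 (by simpa using ha), VectorMeasure.empty, inner_zero_right]]
  rw [simpleIntegral_eq_sum, SimpleFunc.range_map]
  calc ∑ x ∈ p.range.image g, ⟪x, m (p.map g ⁻¹' {x})⟫_𝕜
      = ∑ x ∈ p.range.image g, ∑ a ∈ p.range with g a = x, ⟪g a, m (p ⁻¹' {a})⟫_𝕜 := by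
        refine Finset.sum_congr rfl fun x _ => ?_
        rw [SimpleFunc.map_preimage_singleton, ← Finset.set_biUnion_preimage_singleton,
          VectorMeasure.of_biUnion_finset (pairwiseDisjoint_fiber _ _)
            fun a _ => p.measurableSet_fiber a, inner_sum]
        exact Finset.sum_congr rfl fun a ha => by rw [(Finset.mem_filter.1 ha).2]
    _ = ∑ a ∈ p.range, ⟪g a, m (p ⁻¹' {a})⟫_𝕜 :=
        Finset.sum_fiberwise_of_maps_to (fun a ha => Finset.mem_image_of_mem g ha) _

theorem simpleIntegral_add (φ ψ : SimpleFunc T X) :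
    simpleIntegral 𝕜 m ⇑(φ + ψ) = simpleIntegral 𝕜 m φ + simpleIntegral 𝕜 m ψ := by
  set p := φ.pair ψ
  change simpleIntegral 𝕜 m (p.map fun a => a.1 + a.2) =
    simpleIntegral 𝕜 m (p.map Prod.fst) + simpleIntegral 𝕜 m (p.map Prod.snd)
  simp only [simpleIntegral_map m p _ subset_rfl, ← Finset.sum_add_distrib, inner_add_left]

variable (𝕜) in
noncomputable def simpleIntegralAddHom : SimpleFunc T X →+ 𝕜 :=
  AddMonoidHom.mk' (fun φ => simpleIntegral 𝕜 m φ) (simpleIntegral_add m)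

@[simp]
theorem simpleIntegralAddHom_apply (φ : SimpleFunc T X) :
    simpleIntegralAddHom 𝕜 m φ = simpleIntegral 𝕜 m φ := rfl

variable {m}

theorem norm_simpleIntegral_le (hm : BddVar m) {φ : SimpleFunc T X} {C : ℝ} (hC0 : 0 ≤ C)
    (hC : ∀ t, ‖φ t‖ ≤ C) : ‖simpleIntegral 𝕜 m φ‖ ≤ C * varNorm m := by
  rw [simpleIntegral_eq_sum]
  calc ‖∑ x ∈ φ.range, ⟪x, m (φ ⁻¹' {x})⟫_𝕜‖
      ≤ ∑ x ∈ φ.range, C * ‖m (φ ⁻¹' {x})‖ := by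
        refine (norm_sum_le _ _).trans (Finset.sum_le_sum fun x hx => ?_)
        obtain ⟨t, rfl⟩ := SimpleFunc.mem_range.1 hx
        exact (norm_inner_le_norm _ _).trans (by gcongr; exact hC t)
    _ ≤ C * varNorm m := by
        rw [← Finset.mul_sum]
        exact mul_le_mul_of_nonneg_left (sum_norm_le_varNorm hm
          (fun x _ => φ.measurableSet_fiber x) (pairwiseDisjoint_fiber _ _)) hC0

end SimpleIntegral

section UniformIntegral

variable {T : Type*} [MeasurableSpace T] {𝕜 X : Type*} [RCLike 𝕜] [NormedAddCommGroup X]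
  [InnerProductSpace 𝕜 X] {m : VectorMeasure T X}

theorem tendsto_simpleIntegral_sub_of_tendstoUniformly (hm : BddVar m) {ι : Type*}
    {l : Filter ι} {φ ψ : ι → SimpleFunc T X} {f : T → X}
    (hφ : TendstoUniformly (fun i => ⇑(φ i)) f l) (hψ : TendstoUniformly (fun i => ⇑(ψ i)) f l) :
    Tendsto (fun i => simpleIntegral 𝕜 m (φ i) - simpleIntegral 𝕜 m (ψ i)) l (𝓝 0) := by
  have hφψ : TendstoUniformly (fun i => ⇑(φ i - ψ i)) 0 l := by
    have := hφ.sub hψ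
    rwa [sub_self] at this
  rw [Metric.tendsto_nhds]
  intro ε hε
  have hV : 0 ≤ varNorm m := ENNReal.toReal_nonneg
  have hδ : 0 < ε / (varNorm m + 1) := by positivity
  filter_upwards [Metric.tendstoUniformly_iff.1 hφψ _ hδ] with i hi
  rw [dist_zero_right, ← simpleIntegralAddHom_apply, ← simpleIntegralAddHom_apply,
    ← map_sub, simpleIntegralAddHom_apply]
  calc ‖simpleIntegral 𝕜 m ⇑(φ i - ψ i)‖ ≤ ε / (varNorm m + 1) * varNorm m :=
        norm_simpleIntegral_le hm hδ.le fun t => by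
          simpa [dist_eq_norm, norm_sub_rev] using (hi t).le
    _ < ε := by
        rw [div_mul_eq_mul_div, div_lt_iff₀ (by positivity)]
        nlinarith

theorem hasUIntegral_of_tendstoUniformly (hm : BddVar m) {φ : ℕ → SimpleFunc T X} {f : T → X}
    (hφ : TendstoUniformly (fun n => ⇑(φ n)) f atTop) {I : 𝕜}
    (hI : Tendsto (fun n => simpleIntegral 𝕜 m (φ n)) atTop (𝓝 I)) :
    HasUIntegral 𝕜 m f I := fun g hg hgf => by
  simpa using (tendsto_simpleIntegral_sub_of_tendstoUniformly hm
    (φ := fun n => (hg n).toSimpleFunc) hgf hφ).add hI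

theorem cauchySeq_simpleIntegral (hm : BddVar m) {φ : ℕ → SimpleFunc T X} {f : T → X}
    (hφ : TendstoUniformly (fun n => ⇑(φ n)) f atTop) :
    CauchySeq fun n => simpleIntegral 𝕜 m (φ n) := by
  rw [cauchySeq_iff_tendsto_dist_atTop_0]
  have hfst : TendstoUniformly (fun p : ℕ × ℕ => ⇑(φ p.1)) f atTop := fun u hu =>
    (tendsto_fst.mono_left (prod_atTop_atTop_eq (α := ℕ) (β := ℕ)).ge).eventually (hφ u hu)
  have hsnd : TendstoUniformly (fun p : ℕ × ℕ => ⇑(φ p.2)) f atTop := fun u hu =>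
    (tendsto_snd.mono_left (prod_atTop_atTop_eq (α := ℕ) (β := ℕ)).ge).eventually (hφ u hu)
  simpa [dist_eq_norm] using
    (tendsto_simpleIntegral_sub_of_tendstoUniformly (𝕜 := 𝕜) hm hfst hsnd).norm

end UniformIntegral

section Approximation

variable {T E : Type*} [TopologicalSpace T] [CompactSpace T] [MeasurableSpace T]
  [OpensMeasurableSpace T] [PseudoMetricSpace E] [Nonempty E] {f : T → E}

theorem exists_simpleFunc_dist_lt (hf : Continuous f) {ε : ℝ} (hε : 0 < ε) :
    ∃ φ : SimpleFunc T E, ∀ t, dist (φ t) (f t) < ε := by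
  let _ : MeasurableSpace E := borel E
  have : BorelSpace E := ⟨rfl⟩
  obtain ⟨s, hs, hcover⟩ := Metric.totallyBounded_iff.1 (isCompact_range hf).totallyBounded ε hε
  set l := hs.toFinset.toList
  let e : ℕ → E := fun k => l.getD k (Classical.arbitrary E)
  refine ⟨(SimpleFunc.nearestPt e l.length).comp f hf.measurable, fun t => ?_⟩
  obtain ⟨y, hy, hty⟩ := mem_iUnion₂.1 (hcover (mem_range_self t))
  obtain ⟨k, hk, rfl⟩ := List.mem_iff_getElem.1 (by simpa [l] using hy : y ∈ l)
  have hnear := SimpleFunc.edist_nearestPt_le e (f t) hk.le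
  rw [edist_dist, edist_dist, ENNReal.ofReal_le_ofReal_iff dist_nonneg] at hnear
  refine hnear.trans_lt ?_
  rwa [show e k = l[k] from List.getD_eq_getElem _ _ hk, dist_comm]

theorem exists_simpleFunc_tendstoUniformly (hf : Continuous f) :
    ∃ φ : ℕ → SimpleFunc T E, TendstoUniformly (fun n => ⇑(φ n)) f atTop := by
  choose φ hφ using fun n : ℕ => exists_simpleFunc_dist_lt hf (Nat.one_div_pos_of_nat (n := n))
  refine ⟨φ, Metric.tendstoUniformly_iff.2 fun ε hε => ?_⟩
  filter_upwards [(tendsto_order.1 tendsto_one_div_add_atTop_nhds_zero_nat).2 ε hε] with n hn t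
  exact (dist_comm _ _).trans_lt ((hφ n t).trans hn)

end Approximation

section Series

theorem tendsto_sub_sum_range_of_norm_le {E : Type*} [NormedAddCommGroup E] {a : ℕ → ℕ → E}
    {s : ℕ → E} (ha : ∀ n, HasSum (a n) (s n)) {b : ℕ → ℝ} (hb : Summable b)
    (hab : ∀ᶠ n in atTop, ∀ i, ‖a n i‖ ≤ b i) :
    Tendsto (fun n => s n - ∑ i ∈ Finset.range n, a n i) atTop (𝓝 0) := by
  refine squeeze_zero_norm' (hab.mono fun n hn => ?_) (tendsto_sum_nat_add b)
  exact ((hasSum_nat_add_iff' n).2 (ha n)).norm_le_of_bounded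
    ((summable_nat_add_iff n).2 hb).hasSum fun i => hn (i + n)

variable {𝕜 E F α β : Type*} [NontriviallyNormedField 𝕜] [NormedAddCommGroup E]
  [NormedSpace 𝕜 E] [NormedAddCommGroup F] [NormedSpace 𝕜 F] [CompleteSpace F]

theorem tendstoUniformly_sum_range_apply_comp {A : ℕ → E →L[𝕜] F}
    (hA : Summable fun i => ‖A i‖) (ω : ℕ → α → β) {h : ℕ → β → E} {f : β → E}
    (hhf : TendstoUniformly h f atTop) {C : ℝ} (hC : ∀ t, ‖f t‖ ≤ C) :
    TendstoUniformly (fun n t => ∑ i ∈ Finset.range n, A i (h n (ω i t)))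
      (fun t => ∑' i, A i (f (ω i t))) atTop := by
  set S := ∑' i, ‖A i‖
  have hS : 0 ≤ S := tsum_nonneg fun i => norm_nonneg _
  have hdiff : TendstoUniformly
      (fun n t => ∑ i ∈ Finset.range n, A i (h n (ω i t) - f (ω i t))) 0 atTop := by
    refine Metric.tendstoUniformly_iff.2 fun ε hε => ?_
    have hδ : 0 < ε / (S + 1) := by positivity
    filter_upwards [Metric.tendstoUniformly_iff.1 hhf _ hδ] with n hn t
    rw [Pi.zero_apply, dist_zero_left]
    calc ‖∑ i ∈ Finset.range n, A i (h n (ω i t) - f (ω i t))‖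
        ≤ ∑ i ∈ Finset.range n, ‖A i‖ * (ε / (S + 1)) := by
          refine (norm_sum_le _ _).trans (Finset.sum_le_sum fun i _ => ?_)
          refine (A i).le_opNorm_of_le ?_
          rw [← dist_eq_norm, dist_comm]
          exact (hn _).le
      _ ≤ S * (ε / (S + 1)) := by
          rw [← Finset.sum_mul]
          gcongr
          exact hA.sum_le_tsum _ fun i _ => norm_nonneg _
      _ < ε := by
          rw [mul_div_assoc', div_lt_iff₀ (by positivity)]
          nlinarith
  have hpartial := tendstoUniformly_tsum_nat (hA.mul_right C)
    (f := fun i t => A i (f (ω i t))) fun i t => (A i).le_opNorm_of_le (hC _)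
  convert hdiff.add hpartial using 1
  · ext n t
    simp [map_sub, Finset.sum_sub_distrib]
  · simp

end Series

section ChangeOfVariable

open ContinuousLinearMap

variable {T : Type*} [MeasurableSpace T] {𝕜 X : Type*} [RCLike 𝕜] [NormedAddCommGroup X]
  [InnerProductSpace 𝕜 X] {ω : ℕ → T → T} {R : ℕ → X →L[𝕜] X} {μ ν : VectorMeasure T X}

theorem bddVar_of_hasSum (hω : ∀ i, Measurable (ω i)) (hR : Summable fun i => ‖R i‖) (hμ : BddVar μ)
    (hν : ∀ B, MeasurableSet B → HasSum (fun i => R i (μ (ω i ⁻¹' B))) (ν B)) : BddVar ν := by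
  refine bddVar_of_sum_norm_le (C := ∑' i, ‖R i‖ * varNorm μ) fun P hP => ?_
  have hbound : ∀ i, ∑ A ∈ P, ‖R i (μ (ω i ⁻¹' A))‖ ≤ ‖R i‖ * varNorm μ := fun i => by
    refine (Finset.sum_le_sum fun A _ => (R i).le_opNorm _).trans ?_
    rw [← Finset.mul_sum]
    exact mul_le_mul_of_nonneg_left (sum_norm_le_varNorm hμ (fun A hA => hω i (hP.1 A hA))
      fun A hA B hB hAB => (hP.2.1 hA hB hAB).preimage _) (norm_nonneg _)
  have hsum : ∀ A ∈ P, Summable fun i => ‖R i (μ (ω i ⁻¹' A))‖ := fun A hA =>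
    (hR.mul_right _).of_nonneg_of_le (fun _ => norm_nonneg _) fun i =>
      (Finset.single_le_sum (f := fun A => ‖R i (μ (ω i ⁻¹' A))‖)
        (fun _ _ => norm_nonneg _) hA).trans (hbound i)
  calc ∑ A ∈ P, ‖ν A‖ ≤ ∑ A ∈ P, ∑' i, ‖R i (μ (ω i ⁻¹' A))‖ :=
        Finset.sum_le_sum fun A hA =>
          (hν A (hP.1 A hA)).norm_le_of_bounded (hsum A hA).hasSum fun _ => le_rfl
    _ = ∑' i, ∑ A ∈ P, ‖R i (μ (ω i ⁻¹' A))‖ := (Summable.tsum_finsetSum hsum).symm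
    _ ≤ ∑' i, ‖R i‖ * varNorm μ :=
        (summable_sum hsum).tsum_le_tsum hbound (hR.mul_right _)

variable [CompleteSpace X] (hω : ∀ i, Measurable (ω i))

noncomputable def adjointCompSum (R : ℕ → X →L[𝕜] X) (φ : SimpleFunc T X) (n : ℕ) :
    SimpleFunc T X :=
  ∑ i ∈ Finset.range n, (φ.comp (ω i) (hω i)).map (adjoint (R i))

theorem coe_adjointCompSum (φ : SimpleFunc T X) (n : ℕ) :
    ⇑(adjointCompSum hω R φ n) = fun t => ∑ i ∈ Finset.range n, adjoint (R i) (φ (ω i t)) := by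
  ext t
  simp [adjointCompSum, SimpleFunc.coe_finsetSum]

theorem hasSum_simpleIntegral_adjoint_comp
    (hν : ∀ B, MeasurableSet B → HasSum (fun i => R i (μ (ω i ⁻¹' B))) (ν B))
    (φ : SimpleFunc T X) :
    HasSum (fun i => simpleIntegral 𝕜 μ ((φ.comp (ω i) (hω i)).map (adjoint (R i))))
      (simpleIntegral 𝕜 ν φ) := by
  have hterm : ∀ i, simpleIntegral 𝕜 μ ((φ.comp (ω i) (hω i)).map (adjoint (R i))) =
      ∑ x ∈ φ.range, ⟪x, R i (μ (ω i ⁻¹' (φ ⁻¹' {x})))⟫_𝕜 := fun i => by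
    rw [simpleIntegral_map μ _ _ (SimpleFunc.range_comp_subset_range φ (hω i))]
    simp only [adjoint_inner_left]
    rfl
  simp only [hterm, simpleIntegral_eq_sum]
  exact hasSum_sum fun x _ => (innerSL 𝕜 x).hasSum (hν _ (φ.measurableSet_fiber x))

theorem tendsto_simpleIntegral_sub_adjointCompSum (hR : Summable fun i => ‖R i‖)
    (hμ : BddVar μ) (hν : ∀ B, MeasurableSet B → HasSum (fun i => R i (μ (ω i ⁻¹' B))) (ν B))
    {φ : ℕ → SimpleFunc T X} {f : T → X} (hφ : TendstoUniformly (fun n => ⇑(φ n)) f atTop)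
    {C : ℝ} (hC : ∀ t, ‖f t‖ ≤ C) :
    Tendsto (fun n => simpleIntegral 𝕜 ν (φ n) - simpleIntegral 𝕜 μ (adjointCompSum hω R (φ n) n))
      atTop (𝓝 0) := by
  set K := max C 0 + 1
  have hφK : ∀ᶠ n in atTop, ∀ t, ‖φ n t‖ ≤ K := by
    filter_upwards [Metric.tendstoUniformly_iff.1 hφ 1 one_pos] with n hn t
    have hnt := hn t
    rw [dist_eq_norm'] at hnt
    linarith [norm_le_norm_add_norm_sub' (φ n t) (f t), hC t, le_max_left C 0]
  have hterm : ∀ᶠ n in atTop, ∀ i,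
      ‖simpleIntegral 𝕜 μ (((φ n).comp (ω i) (hω i)).map (adjoint (R i)))‖ ≤
        ‖R i‖ * K * varNorm μ := by
    filter_upwards [hφK] with n hn i
    refine norm_simpleIntegral_le hμ (by positivity) fun t => ?_
    simpa using (adjoint (R i)).le_opNorm_of_le (hn (ω i t))
  have hsum : ∀ n, simpleIntegral 𝕜 μ (adjointCompSum hω R (φ n) n) =
      ∑ i ∈ Finset.range n, simpleIntegral 𝕜 μ (((φ n).comp (ω i) (hω i)).map (adjoint (R i))) :=
    fun n => map_sum (simpleIntegralAddHom 𝕜 μ) _ _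
  simpa only [hsum] using tendsto_sub_sum_range_of_norm_le
    (hasSum_simpleIntegral_adjoint_comp hω hν <| φ ·) (hR.mul_right K |>.mul_right _) hterm

end ChangeOfVariable

theorem countable_change_of_variable_general
    {T : Type*} [MetricSpace T] [CompactSpace T] [MeasurableSpace T] [BorelSpace T]
    {𝕜 X : Type*} [RCLike 𝕜] [NormedAddCommGroup X] [InnerProductSpace 𝕜 X] [CompleteSpace X]
    (ω : ℕ → T → T) (r : ℕ → NNReal) (hω : ∀ i, LipschitzWith (r i) (ω i))
    (R : ℕ → X →L[𝕜] X) (hR : Summable fun i => ‖R i‖)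
    (μ : VectorMeasure T X) (hμ : BddVar μ)
    (ν : VectorMeasure T X)
    (hν : ∀ B : Set T, MeasurableSet B → HasSum (fun i => (R i) (μ (ω i ⁻¹' B))) (ν B))
    (f : T → X) (hf : Continuous f) :
    ∃ I : 𝕜, HasUIntegral 𝕜 ν f I ∧
      HasUIntegral 𝕜 μ (fun t => ∑' i, ContinuousLinearMap.adjoint (R i) (f (ω i t))) I := by
  have hωm : ∀ i, Measurable (ω i) := fun i => (hω i).continuous.measurable
  have hνvar : BddVar ν := bddVar_of_hasSum hωm hR hμ hν
  obtain ⟨C, hC⟩ := (isCompact_range hf).isBounded.exists_norm_le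
  replace hC : ∀ t, ‖f t‖ ≤ C := fun t => hC _ (mem_range_self t)
  obtain ⟨φ, hφ⟩ := exists_simpleFunc_tendstoUniformly hf
  obtain ⟨I, hI⟩ := cauchySeq_tendsto_of_complete (cauchySeq_simpleIntegral (𝕜 := 𝕜) hνvar hφ)
  refine ⟨I, hasUIntegral_of_tendstoUniformly hνvar hφ hI,
    hasUIntegral_of_tendstoUniformly hμ (φ := fun n => adjointCompSum hωm R (φ n) n) ?_ ?_⟩
  · simpa only [coe_adjointCompSum] using tendstoUniformly_sum_range_apply_comp
      (A := fun i => ContinuousLinearMap.adjoint (R i)) (by simpa using hR) ω hφ hC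
  · simpa using hI.sub (tendsto_simpleIntegral_sub_adjointCompSum hωm hR hμ hν hφ hC)

/-- countable change of variable: if `ν = H(μ)` pointwise (i.e.
`ν(B) = ∑ R_i(μ(ω_i⁻¹(B)))` for Borel `B`) and `g = ∑ R_i* ∘ f ∘ ω_i`, then
`∫ f dν = ∫ g dμ`. -/
theorem countable_change_of_variable
    {T : Type*} [MetricSpace T] [CompactSpace T] [MeasurableSpace T] [BorelSpace T]
    {𝕜 X : Type*} [RCLike 𝕜] [NormedAddCommGroup X] [InnerProductSpace 𝕜 X] [CompleteSpace X]
    (ω : ℕ → T → T) (r : ℕ → NNReal) (hω : ∀ i, LipschitzWith (r i) (ω i))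
    (hrbdd : ∃ C : NNReal, ∀ i, r i ≤ C)
    (R : ℕ → X →L[𝕜] X) (hR : Summable fun i => ‖R i‖)
    (μ : VectorMeasure T X) (hμ : BddVar μ)
    (ν : VectorMeasure T X)
    (hν : ∀ B : Set T, MeasurableSet B → HasSum (fun i => (R i) (μ (ω i ⁻¹' B))) (ν B))
    (f : T → X) (hf : Continuous f) :
    ∃ I : 𝕜, HasUIntegral 𝕜 ν f I ∧
      HasUIntegral 𝕜 μ (fun t => ∑' i, ContinuousLinearMap.adjoint (R i) (f (ω i t))) I :=
  countable_change_of_variable_general ω r hω R hR μ hμ ν hν f hf
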